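/- Let n ≥ 1 be an integer and Λ a real constant, and let a, b, c be real-valued functions on an open interval I ⊆ ℝ that are differentiable, nowhere vanishing, and satisfy the first-order system (with ′ = d/dζ): a′ = (1/2)aⁿbⁿ⁻¹(b² + c² − a²), b′ = (1/2)aⁿ⁻¹bⁿ(c² + a² − b²), c′ = (1/2)n·aⁿ⁻¹bⁿ⁻¹c(a² + b² − c² − (2Λ/n)a²b²). Then on I the functions a′/a, b′/b, c′/c and (1/(aⁿbⁿc))(n·a′/a + n·b′/b + c′/c) are differentiable and the following four equations hold: (1) −(1/(a^{2n−2}b^{2n}c²))·(a′/a)′ + (a⁴ − (b² − c²)²)/(2b²c²) + (n−1) = Λa²; (2) −(1/(a^{2n}b^{2n−2}c²))·(b′/b)′ + (b⁴ − (c² − a²)²)/(2a²c²) + (n−1) = Λb²; (3) −(1/(a^{2n}b^{2n}))·(c′/c)′ + n(c⁴ − (a² − b²)²)/(2a²b²) = Λc²; (4) −(1/(aⁿbⁿc))·[(1/(aⁿbⁿc))(n·a′/a + n·b′/b + c′/c)]′ − (1/(a^{2n}b^{2n}c²))·(n(a′/a)² + n(b′/b)² + (c′/c)²) = Λ. -/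

import Mathlib

private lemma powD {f : ℝ → ℝ} {f' x : ℝ} (h : HasDerivAt f f' x) (m : ℕ) (hf : f x ≠ 0) :
    HasDerivAt (fun v => f v ^ m) ((m : ℝ) * f x ^ m * f' / f x) x := by
  have h2 : HasDerivAt (fun v => f v ^ m) ((m : ℝ) * f x ^ (m - 1) * f') x := h.fun_pow m
  convert h2 using 1
  rcases m with _ | k
  · simp
  · rw [Nat.add_sub_cancel]
    field_simp [pow_succ]
    ring

private lemma sqD {f : ℝ → ℝ} {f' x : ℝ} (h : HasDerivAt f f' x) :
    HasDerivAt (fun v => f v ^ 2) (2 * f x * f') x := by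
  simpa [pow_one] using h.fun_pow 2

/- STATEMENT 0: the first-order (Kähler–Einstein) system in the coordinate ζ implies
the four second-order Einstein equations of Bérard-Bergery. -/

set_option maxHeartbeats 4000000 in
theorem einstein_equations_from_first_order_system
    (n : ℕ) (hn : 1 ≤ n) (Λ : ℝ) (I : Set ℝ) (hI : IsOpen I) (hI' : I.OrdConnected)
    (a b c : ℝ → ℝ)
    (ha0 : ∀ u ∈ I, a u ≠ 0) (hb0 : ∀ u ∈ I, b u ≠ 0) (hc0 : ∀ u ∈ I, c u ≠ 0)
    (ha : ∀ u ∈ I, HasDerivAt a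
      ((1/2) * a u ^ n * b u ^ (n-1) * (b u ^ 2 + c u ^ 2 - a u ^ 2)) u)
    (hb : ∀ u ∈ I, HasDerivAt b
      ((1/2) * a u ^ (n-1) * b u ^ n * (c u ^ 2 + a u ^ 2 - b u ^ 2)) u)
    (hc : ∀ u ∈ I, HasDerivAt c
      ((1/2) * (n : ℝ) * a u ^ (n-1) * b u ^ (n-1) * c u *
        (a u ^ 2 + b u ^ 2 - c u ^ 2 - (2 * Λ / (n : ℝ)) * a u ^ 2 * b u ^ 2)) u) :
    ∀ u ∈ I,
      DifferentiableAt ℝ (fun v => deriv a v / a v) u ∧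
      DifferentiableAt ℝ (fun v => deriv b v / b v) u ∧
      DifferentiableAt ℝ (fun v => deriv c v / c v) u ∧
      DifferentiableAt ℝ (fun v => (1 / (a v ^ n * b v ^ n * c v)) *
        ((n : ℝ) * (deriv a v / a v) + (n : ℝ) * (deriv b v / b v) + deriv c v / c v)) u ∧
      (-(1 / (a u ^ (2*n-2) * b u ^ (2*n) * c u ^ 2)) * deriv (fun v => deriv a v / a v) u
          + (a u ^ 4 - (b u ^ 2 - c u ^ 2) ^ 2) / (2 * b u ^ 2 * c u ^ 2) + ((n : ℝ) - 1)
        = Λ * a u ^ 2) ∧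
      (-(1 / (a u ^ (2*n) * b u ^ (2*n-2) * c u ^ 2)) * deriv (fun v => deriv b v / b v) u
          + (b u ^ 4 - (c u ^ 2 - a u ^ 2) ^ 2) / (2 * a u ^ 2 * c u ^ 2) + ((n : ℝ) - 1)
        = Λ * b u ^ 2) ∧
      (-(1 / (a u ^ (2*n) * b u ^ (2*n))) * deriv (fun v => deriv c v / c v) u
          + (n : ℝ) * (c u ^ 4 - (a u ^ 2 - b u ^ 2) ^ 2) / (2 * a u ^ 2 * b u ^ 2)
        = Λ * c u ^ 2) ∧
      (-(1 / (a u ^ n * b u ^ n * c u)) *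
          deriv (fun v => (1 / (a v ^ n * b v ^ n * c v)) *
            ((n : ℝ) * (deriv a v / a v) + (n : ℝ) * (deriv b v / b v) + deriv c v / c v)) u
        - (1 / (a u ^ (2*n) * b u ^ (2*n) * c u ^ 2)) *
            ((n : ℝ) * (deriv a u / a u) ^ 2 + (n : ℝ) * (deriv b u / b u) ^ 2
              + (deriv c u / c u) ^ 2)
        = Λ) := by
  obtain ⟨m, rfl⟩ : ∃ m, n = m + 1 := ⟨n - 1, (Nat.succ_pred_eq_of_pos hn).symm⟩
  simp only [Nat.add_sub_cancel] at ha hb hc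
  have hm1 : ((m : ℝ) + 1) ≠ 0 := by positivity
  -- the closed-form logarithmic derivatives
  have hqa : ∀ v ∈ I, deriv a v / a v
      = 1/2 * (a v ^ m * b v ^ m * (b v ^ 2 + c v ^ 2 - a v ^ 2)) := by
    intro v hv
    rw [(ha v hv).deriv]
    field_simp [ha0 v hv]
    ring
  have hqb : ∀ v ∈ I, deriv b v / b v
      = 1/2 * (a v ^ m * b v ^ m * (c v ^ 2 + a v ^ 2 - b v ^ 2)) := by
    intro v hv
    rw [(hb v hv).deriv]
    field_simp [hb0 v hv]
    ring
  have hqc : ∀ v ∈ I, deriv c v / c v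
      = 1/2 * (((m : ℝ) + 1) * (a v ^ m * b v ^ m *
          (a v ^ 2 + b v ^ 2 - c v ^ 2 - 2 * Λ / ((m : ℝ) + 1) * (a v ^ 2 * b v ^ 2)))) := by
    intro v hv
    have h := (hc v hv).deriv
    push_cast at h
    rw [h]
    field_simp [hc0 v hv]
  have hqg : ∀ v ∈ I, (1 / (a v ^ (m+1) * b v ^ (m+1) * c v)) *
        (((m+1 : ℕ) : ℝ) * (deriv a v / a v) + ((m+1 : ℕ) : ℝ) * (deriv b v / b v)
          + deriv c v / c v)
      = (((m : ℝ) + 1) * (a v ^ 2 + b v ^ 2 + c v ^ 2) - 2 * Λ * (a v ^ 2 * b v ^ 2))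
          / (2 * (a v * b v * c v)) := by
    intro v hv
    rw [hqa v hv, hqb v hv, hqc v hv]
    push_cast
    field_simp [ha0 v hv, hb0 v hv, hc0 v hv]
    ring
  intro u hu
  have hA0 : a u ≠ 0 := ha0 u hu
  have hB0 : b u ≠ 0 := hb0 u hu
  have hC0 : c u ≠ 0 := hc0 u hu
  have hmem : I ∈ nhds u := hI.mem_nhds hu
  -- derivative values at u, named
  obtain ⟨da, hda, hA⟩ : ∃ d, d = 1/2 * a u ^ (m+1) * b u ^ m * (b u ^ 2 + c u ^ 2 - a u ^ 2)
      ∧ HasDerivAt a d u := ⟨_, rfl, ha u hu⟩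
  obtain ⟨db, hdb, hB⟩ : ∃ d, d = 1/2 * a u ^ m * b u ^ (m+1) * (c u ^ 2 + a u ^ 2 - b u ^ 2)
      ∧ HasDerivAt b d u := ⟨_, rfl, hb u hu⟩
  obtain ⟨dc, hdc, hC⟩ : ∃ d, d = 1/2 * ((m : ℝ) + 1) * a u ^ m * b u ^ m * c u *
      (a u ^ 2 + b u ^ 2 - c u ^ 2 - 2 * Λ / ((m : ℝ) + 1) * a u ^ 2 * b u ^ 2)
      ∧ HasDerivAt c d u := by
    have h := hc u hu
    push_cast at h
    exact ⟨_, rfl, h⟩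
  have hAm := powD hA m hA0
  have hBm := powD hB m hB0
  have hA2 := sqD hA
  have hB2 := sqD hB
  have hC2 := sqD hC
  -- derivative of the model for a'/a
  have hfa : HasDerivAt (fun v => 1/2 * (a v ^ m * b v ^ m * (b v ^ 2 + c v ^ 2 - a v ^ 2)))
      (1/2 * (((m : ℝ) * a u ^ m * da / a u * (b u ^ m)
          + a u ^ m * ((m : ℝ) * b u ^ m * db / b u)) * (b u ^ 2 + c u ^ 2 - a u ^ 2)
        + a u ^ m * b u ^ m * (2 * b u * db + 2 * c u * dc - 2 * a u * da))) u :=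
    HasDerivAt.const_mul (1/2 : ℝ) ((hAm.mul hBm).mul ((hB2.add hC2).sub hA2))
  have hfb : HasDerivAt (fun v => 1/2 * (a v ^ m * b v ^ m * (c v ^ 2 + a v ^ 2 - b v ^ 2)))
      (1/2 * (((m : ℝ) * a u ^ m * da / a u * (b u ^ m)
          + a u ^ m * ((m : ℝ) * b u ^ m * db / b u)) * (c u ^ 2 + a u ^ 2 - b u ^ 2)
        + a u ^ m * b u ^ m * (2 * c u * dc + 2 * a u * da - 2 * b u * db))) u :=
    HasDerivAt.const_mul (1/2 : ℝ) ((hAm.mul hBm).mul ((hC2.add hA2).sub hB2))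
  have hfc : HasDerivAt (fun v => 1/2 * (((m : ℝ) + 1) * (a v ^ m * b v ^ m *
        (a v ^ 2 + b v ^ 2 - c v ^ 2 - 2 * Λ / ((m : ℝ) + 1) * (a v ^ 2 * b v ^ 2)))))
      (1/2 * (((m : ℝ) + 1) * (((m : ℝ) * a u ^ m * da / a u * (b u ^ m)
          + a u ^ m * ((m : ℝ) * b u ^ m * db / b u)) *
            (a u ^ 2 + b u ^ 2 - c u ^ 2 - 2 * Λ / ((m : ℝ) + 1) * (a u ^ 2 * b u ^ 2))
        + a u ^ m * b u ^ m * (2 * a u * da + 2 * b u * db - 2 * c u * dc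
          - 2 * Λ / ((m : ℝ) + 1) * (2 * a u * da * (b u ^ 2) + a u ^ 2 * (2 * b u * db)))))) u :=
    HasDerivAt.const_mul (1/2 : ℝ) (HasDerivAt.const_mul ((m : ℝ) + 1)
      ((hAm.mul hBm).mul (((hA2.add hB2).sub hC2).sub
        (HasDerivAt.const_mul (2 * Λ / ((m : ℝ) + 1)) (hA2.mul hB2)))))
  have hden0 : 2 * (a u * b u * c u) ≠ 0 :=
    mul_ne_zero two_ne_zero (mul_ne_zero (mul_ne_zero hA0 hB0) hC0)
  have hfg : HasDerivAt (fun v =>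
        (((m : ℝ) + 1) * (a v ^ 2 + b v ^ 2 + c v ^ 2) - 2 * Λ * (a v ^ 2 * b v ^ 2))
          / (2 * (a v * b v * c v)))
      (((((m : ℝ) + 1) * (2 * a u * da + 2 * b u * db + 2 * c u * dc)
          - 2 * Λ * (2 * a u * da * (b u ^ 2) + a u ^ 2 * (2 * b u * db)))
            * (2 * (a u * b u * c u))
        - (((m : ℝ) + 1) * (a u ^ 2 + b u ^ 2 + c u ^ 2) - 2 * Λ * (a u ^ 2 * b u ^ 2))
            * (2 * ((da * b u + a u * db) * c u + a u * b u * dc)))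
        / (2 * (a u * b u * c u)) ^ 2) u :=
    HasDerivAt.div
      ((HasDerivAt.const_mul ((m : ℝ) + 1) ((hA2.add hB2).add hC2)).sub
        (HasDerivAt.const_mul (2 * Λ) (hA2.mul hB2)))
      (HasDerivAt.const_mul (2 : ℝ) ((hA.mul hB).mul hC)) hden0
  -- eventual equalities
  have hea : (fun v => deriv a v / a v) =ᶠ[nhds u]
      (fun v => 1/2 * (a v ^ m * b v ^ m * (b v ^ 2 + c v ^ 2 - a v ^ 2))) :=
    Filter.eventually_of_mem hmem hqa
  have heb : (fun v => deriv b v / b v) =ᶠ[nhds u]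
      (fun v => 1/2 * (a v ^ m * b v ^ m * (c v ^ 2 + a v ^ 2 - b v ^ 2))) :=
    Filter.eventually_of_mem hmem hqb
  have hec : (fun v => deriv c v / c v) =ᶠ[nhds u]
      (fun v => 1/2 * (((m : ℝ) + 1) * (a v ^ m * b v ^ m *
        (a v ^ 2 + b v ^ 2 - c v ^ 2 - 2 * Λ / ((m : ℝ) + 1) * (a v ^ 2 * b v ^ 2))))) :=
    Filter.eventually_of_mem hmem hqc
  have heg : (fun v => (1 / (a v ^ (m+1) * b v ^ (m+1) * c v)) *
        (((m+1 : ℕ) : ℝ) * (deriv a v / a v) + ((m+1 : ℕ) : ℝ) * (deriv b v / b v)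
          + deriv c v / c v)) =ᶠ[nhds u]
      (fun v => (((m : ℝ) + 1) * (a v ^ 2 + b v ^ 2 + c v ^ 2) - 2 * Λ * (a v ^ 2 * b v ^ 2))
          / (2 * (a v * b v * c v))) :=
    Filter.eventually_of_mem hmem hqg
  refine ⟨hea.differentiableAt_iff.mpr hfa.differentiableAt,
    heb.differentiableAt_iff.mpr hfb.differentiableAt,
    hec.differentiableAt_iff.mpr hfc.differentiableAt,
    heg.differentiableAt_iff.mpr hfg.differentiableAt, ?_, ?_, ?_, ?_⟩
  · rw [hea.deriv_eq, hfa.deriv, show 2*(m+1)-2 = 2*m from by omega]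
    rw [hda, hdb, hdc]
    push_cast
    field_simp [hA0, hB0, hC0]
    ring
  · rw [heb.deriv_eq, hfb.deriv, show 2*(m+1)-2 = 2*m from by omega]
    rw [hda, hdb, hdc]
    push_cast
    field_simp [hA0, hB0, hC0]
    ring
  · rw [hec.deriv_eq, hfc.deriv]
    rw [hda, hdb, hdc]
    push_cast
    field_simp [hA0, hB0, hC0]
    ring
  · rw [heg.deriv_eq, hfg.deriv, hqa u hu, hqb u hu, hqc u hu]
    rw [hda, hdb, hdc]
    push_cast
    field_simp [hA0, hB0, hC0]
    ring
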